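/- arXiv:1301.4428 — 5 statements merged into one kernel-verified Lean document; each statement's English description precedes it below -/
import Mathlib

section
/- If π_0 is the density of Γ(λ, q) for some λ > 0, then for every n ≥ 1 the optimal filter density π_n^{y_{1:n}} is the density of Γ(λ_n, q), where λ_n = b^{−n} λ + Σ_{j=1}^n b^{j−n} y_j. -/
open MeasureTheory Set

/-- Density of the Gamma distribution `Γ(lam, r)` with rate `lam` and shape `r`
(for `x > 0`). -/
noncomputable def gammaDen (lam r x : ℝ) : ℝ :=
  lam ^ r * x ^ (r - 1) * Real.exp (-(lam * x)) / Real.Gamma r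

/-- Signal transition density `p(s, x)`. -/
noncomputable def pKer (α β b s x : ℝ) : ℝ :=
  if 0 ≤ x ∧ x ≤ b * s then
    (b * s) ^ (1 - (α + β)) * x ^ (α - 1) * (b * s - x) ^ (β - 1) /
      (Real.Gamma α * Real.Gamma β / Real.Gamma (α + β))
  else 0

/-- Observation density `g(x, y)`. -/
noncomputable def gObs (β x y : ℝ) : ℝ :=
  x ^ β * y ^ (β - 1) * Real.exp (-(x * y)) / Real.Gamma β

/-!
Conjugacy: integrating the transition kernel against a `Γ(l, α + β)` density gives a
`Γ(l / b, α)` density (a Beta–Gamma convolution), and multiplying a `Γ(m, α)` density by the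
observation likelihood gives a multiple of `x ^ (α + β - 1) * exp (-((m + y) x))`, which
normalisation forces to be the `Γ(m + y, α + β)` density. So one filter step maps the rate
`Λ` to `Λ / b + y`, and unrolling this recursion gives `λ_n`.
-/

section

open Real

lemma integral_Ioi_comp_add_right (a : ℝ) (f : ℝ → ℝ) :
    ∫ s in Ioi a, f s = ∫ u in Ioi 0, f (u + a) := by
  rw [← integral_indicator measurableSet_Ioi, ← integral_indicator measurableSet_Ioi,
    ← integral_add_right_eq_self ((Ioi a).indicator f) a]
  congr 1
  ext u
  simp only [indicator_apply, mem_Ioi, lt_add_iff_pos_left]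

lemma integral_rpow_mul_exp_neg_mul_Ioi_eq_div {r l : ℝ} (hr : 0 < r) (hl : 0 < l) :
    ∫ t in Ioi 0, t ^ (r - 1) * exp (-(l * t)) = Gamma r / l ^ r := by
  rw [integral_rpow_mul_exp_neg_mul_Ioi hr hl, one_div, inv_rpow hl.le, inv_mul_eq_div]

lemma integral_Ioi_sub_rpow_mul_exp_neg_mul {β b l : ℝ} (x : ℝ) (hβ : 0 < β) (hb : 0 < b)
    (hl : 0 < l) :
    ∫ s in Ioi (x / b), (b * s - x) ^ (β - 1) * exp (-(l * s))
      = b ^ (β - 1) * exp (-(l / b * x)) * (Gamma β / l ^ β) := by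
  rw [integral_Ioi_comp_add_right, ← integral_rpow_mul_exp_neg_mul_Ioi_eq_div hβ hl,
    ← integral_const_mul]
  refine setIntegral_congr_fun measurableSet_Ioi fun u (hu : 0 < u) => ?_
  have hshift : b * (u + x / b) - x = b * u := by field_simp; ring
  rw [hshift, mul_rpow hb.le hu.le, show -(l * (u + x / b)) = -(l * u) + -(l / b * x) by ring,
    exp_add]
  ring

lemma integral_pKer_mul_gammaDen {α β b l x : ℝ} (hα : 0 < α) (hβ : 0 < β) (hb : 0 < b)
    (hl : 0 < l) (hx : 0 < x) :
    ∫ s in Ioi 0, pKer α β b s x * gammaDen l (α + β) s = gammaDen (l / b) α x := by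
  have hxb : 0 < x / b := div_pos hx hb
  have hΓα := Gamma_pos_of_pos hα
  have hΓβ := Gamma_pos_of_pos hβ
  have hΓq := Gamma_pos_of_pos (add_pos hα hβ)
  set C := l ^ (α + β) * b ^ (1 - (α + β)) / (Gamma α * Gamma β)
  have hsupp : ∀ s ∈ Ioi 0 \ Ici (x / b), pKer α β b s x * gammaDen l (α + β) s = 0 := by
    rintro s ⟨-, hs⟩
    have : ¬ (0 ≤ x ∧ x ≤ b * s) := fun h => hs ((div_le_iff₀' hb).mpr h.2)
    simp [pKer, this]
  have hdensity : ∀ s ∈ Ioi (x / b), pKer α β b s x * gammaDen l (α + β) s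
      = x ^ (α - 1) * C * ((b * s - x) ^ (β - 1) * exp (-(l * s))) := by
    intro s (hs : x / b < s)
    have hs0 : 0 < s := hxb.trans hs
    have hxs : x ≤ b * s := ((div_lt_iff₀' hb).mp hs).le
    have hsplit : (b * s) ^ (1 - (α + β)) = b ^ (1 - (α + β)) / s ^ (α + β - 1) := by
      rw [mul_rpow hb.le hs0.le, div_eq_mul_inv, ← rpow_neg hs0.le, neg_sub]
    simp only [pKer, gammaDen, C, if_pos (And.intro hx.le hxs), hsplit]
    field_simp
  have hconst : C * b ^ (β - 1) * (Gamma β / l ^ β) = (l / b) ^ α / Gamma α := by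
    have hb_pow : b ^ (1 - (α + β)) * b ^ (β - 1) * b ^ α = 1 := by
      rw [← rpow_add hb, ← rpow_add hb, show 1 - (α + β) + (β - 1) + α = 0 by ring, rpow_zero]
    simp only [C, rpow_add hl, div_rpow hl.le hb.le]
    field_simp
    linear_combination hb_pow
  calc ∫ s in Ioi 0, pKer α β b s x * gammaDen l (α + β) s
      = ∫ s in Ioi (x / b), pKer α β b s x * gammaDen l (α + β) s := by
        rw [setIntegral_eq_of_subset_of_forall_sdiff_eq_zero measurableSet_Ioi
          (Ici_subset_Ioi.mpr hxb) hsupp, integral_Ici_eq_integral_Ioi]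
    _ = x ^ (α - 1) * C * (b ^ (β - 1) * exp (-(l / b * x)) * (Gamma β / l ^ β)) := by
        rw [setIntegral_congr_fun measurableSet_Ioi hdensity, integral_const_mul,
          integral_Ioi_sub_rpow_mul_exp_neg_mul x hβ hb hl]
    _ = gammaDen (l / b) α x := by
        rw [gammaDen]
        linear_combination x ^ (α - 1) * exp (-(l / b * x)) * hconst

lemma gObs_mul_gammaDen {α β m x : ℝ} (y : ℝ) (hx : 0 < x) :
    gObs β x y * gammaDen m α x
      = y ^ (β - 1) * m ^ α / (Gamma β * Gamma α) * (x ^ (α + β - 1) * exp (-((m + y) * x))) := by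
  have hpow : x ^ β * x ^ (α - 1) = x ^ (α + β - 1) := by
    rw [← rpow_add hx]; ring_nf
  have hexp : exp (-(x * y)) * exp (-(m * x)) = exp (-((m + y) * x)) := by
    rw [← exp_add]; ring_nf
  simp only [gObs, gammaDen, ← hpow, ← hexp]
  ring

lemma eqOn_gammaDen_of_integral_eq_one {f : ℝ → ℝ} {K r m : ℝ} (hr : 0 < r) (hm : 0 < m)
    (hf : EqOn f (fun x => K * (x ^ (r - 1) * exp (-(m * x)))) (Ioi 0))
    (hf_one : ∫ x in Ioi 0, f x = 1) :
    EqOn f (gammaDen m r) (Ioi 0) := by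
  have hK : K = m ^ r / Gamma r := by
    rw [setIntegral_congr_fun measurableSet_Ioi hf, integral_const_mul,
      integral_rpow_mul_exp_neg_mul_Ioi_eq_div hr hm] at hf_one
    field_simp at hf_one ⊢
    linarith
  intro x hx
  rw [hf hx, hK, gammaDen]
  ring

lemma eqOn_gammaDen_filter_step {α β b Λ y c : ℝ} {p p' : ℝ → ℝ} (hα : 0 < α) (hβ : 0 < β)
    (hb : 0 < b) (hΛ : 0 < Λ) (hy : 0 ≤ y) (hp : EqOn p (gammaDen Λ (α + β)) (Ioi 0))
    (hp' : ∀ x ∈ Ioi 0, p' x = gObs β x y * (∫ s in Ioi 0, pKer α β b s x * p s) / c)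
    (hp'_one : ∫ x in Ioi 0, p' x = 1) :
    EqOn p' (gammaDen (Λ / b + y) (α + β)) (Ioi 0) := by
  refine eqOn_gammaDen_of_integral_eq_one (K := y ^ (β - 1) * (Λ / b) ^ α /
    (Gamma β * Gamma α) / c) (add_pos hα hβ) (by positivity) (fun x (hx : 0 < x) => ?_) hp'_one
  have hpredict : ∫ s in Ioi 0, pKer α β b s x * p s = gammaDen (Λ / b) α x := by
    rw [← integral_pKer_mul_gammaDen hα hβ hb hΛ hx]
    exact setIntegral_congr_fun measurableSet_Ioi fun s hs => congrArg _ (hp hs)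
  rw [hp' x hx, hpredict, gObs_mul_gammaDen y hx]
  ring

end

noncomputable def filterRate (lam b : ℝ) (y : ℕ → ℝ) (n : ℕ) : ℝ :=
  lam / b ^ n + ∑ j ∈ Finset.Icc 1 n, y j * b ^ j / b ^ n

lemma filterRate_zero (lam b : ℝ) (y : ℕ → ℝ) : filterRate lam b y 0 = lam := by
  simp [filterRate]

lemma filterRate_succ (lam : ℝ) {b : ℝ} (hb : b ≠ 0) (y : ℕ → ℝ) (n : ℕ) :
    filterRate lam b y (n + 1) = filterRate lam b y n / b + y (n + 1) := by
  simp only [filterRate, Finset.sum_Icc_succ_top (Nat.le_add_left 1 n), add_div,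
    Finset.sum_div, pow_succ]
  field_simp
  ring

lemma filterRate_pos {lam b : ℝ} (hlam : 0 < lam) (hb : 0 < b) {y : ℕ → ℝ}
    (hy : ∀ j, 1 ≤ j → 0 ≤ y j) (n : ℕ) : 0 < filterRate lam b y n := by
  refine add_pos_of_pos_of_nonneg (by positivity) (Finset.sum_nonneg fun j hj => ?_)
  have := hy j (Finset.mem_Icc.mp hj).1
  positivity

theorem gamma_initial_filter_is_gamma_general
    (α β b lam : ℝ) (hα : 0 < α) (hβ : 0 < β) (hb : 0 < b) (hlam : 0 < lam)
    (y : ℕ → ℝ) (hy : ∀ j, 1 ≤ j → 0 < y j)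
    (π : ℕ → ℝ → ℝ) (c : ℕ → ℝ)
    (hπ0 : ∀ x ∈ Set.Ioi (0 : ℝ), π 0 x = gammaDen lam (α + β) x)
    (hrec : ∀ n, ∀ x ∈ Set.Ioi (0 : ℝ),
      π (n + 1) x =
        gObs β x (y (n + 1)) * (∫ s in Set.Ioi (0 : ℝ), pKer α β b s x * π n s) / c (n + 1))
    (hnorm : ∀ n, (∫ x in Set.Ioi (0 : ℝ), π (n + 1) x) = 1) :
    ∀ n, 1 ≤ n → ∀ x ∈ Set.Ioi (0 : ℝ),
      π n x =
        gammaDen (lam / b ^ n + ∑ j ∈ Finset.Icc 1 n, y j * b ^ j / b ^ n) (α + β) x := by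
  have hy' : ∀ j, 1 ≤ j → 0 ≤ y j := fun j hj => (hy j hj).le
  suffices h : ∀ n, EqOn (π n) (gammaDen (filterRate lam b y n) (α + β)) (Ioi 0) from
    fun n _ x hx => h n hx
  intro n
  induction n with
  | zero => rwa [filterRate_zero]
  | succ n ih =>
    rw [filterRate_succ lam hb.ne']
    exact eqOn_gammaDen_filter_step hα hβ hb (filterRate_pos hlam hb hy' n)
      (hy' (n + 1) (Nat.le_add_left 1 n)) ih (hrec n) (hnorm n)

/-- If `π₀` is the density of `Γ(λ, q)`, `q = α + β`, then the optimal filter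
density `π_n^{y_{1:n}}` is the density of `Γ(λ_n, q)` with
`λ_n = b^{-n} λ + ∑_{j=1}^n b^{j-n} y_j`. -/
theorem gamma_initial_filter_is_gamma
    (α β b lam : ℝ) (hα : 0 < α) (hβ : 0 < β) (hb : 0 < b) (hlam : 0 < lam)
    (y : ℕ → ℝ) (hy : ∀ j, 1 ≤ j → 0 < y j)
    (π : ℕ → ℝ → ℝ) (c : ℕ → ℝ) (hc : ∀ n, 0 < c (n + 1))
    (hπ0 : ∀ x ∈ Set.Ioi (0 : ℝ), π 0 x = gammaDen lam (α + β) x)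
    (hrec : ∀ n, ∀ x ∈ Set.Ioi (0 : ℝ),
      π (n + 1) x =
        gObs β x (y (n + 1)) * (∫ s in Set.Ioi (0 : ℝ), pKer α β b s x * π n s) / c (n + 1))
    (hnorm : ∀ n, (∫ x in Set.Ioi (0 : ℝ), π (n + 1) x) = 1) :
    ∀ n, 1 ≤ n → ∀ x ∈ Set.Ioi (0 : ℝ),
      π n x =
        gammaDen (lam / b ^ n + ∑ j ∈ Finset.Icc 1 n, y j * b ^ j / b ^ n) (α + β) x :=
  gamma_initial_filter_is_gamma_general α β b lam hα hβ hb hlam y hy π c hπ0 hrec hnorm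
end

section
/- Suppose π_n^{y_{1:n}}(x) = c_n x^{q−1} ∫ λ^q e^{−λx} dU_n(λ) for x > 0, where U_n is a probability measure supported in a compact subinterval of (0,∞) and c_n > 0 is a normalizing constant. Then π_{n+1}^{y_{1:n+1}}(x) = c_{n+1} x^{q−1} ∫ λ^q e^{−λx} dU_{n+1}(λ) for x > 0, where U_{n+1} is the normalization of the finite measure A ↦ ∫ 1_A(λ/b + y_{n+1}) (λ/b + y_{n+1})^{−q} λ^α dU_n(λ), i.e. U_{n+1} arises from U_n by multiplying the density by λ^α, pushing forward under λ ↦ λ/b + y_{n+1}, multiplying by λ^{−q}, and normalizing. -/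
/-!
For fixed `λ > 0` the Beta transition kernel integrates against a Gamma factor in closed form:
substituting `s = w + x / b`,
`∫_{x/b}^∞ (b s - x)^(β-1) e^(-λ s) ds = b^(β-1) Γ(β) λ^(-β) e^(-λ x / b)`.
Exchanging the `s`- and `λ`-integrals (the support of `U_n` in a compact subinterval of `(0, ∞)`
gives the domination needed for Fubini), the predicted density is a constant times
`x^(α-1) ∫ λ^α e^(-λ x / b) dU_n(λ)`. The observation density contributes `x^β e^(-x y)`, leaving
`x^(q-1) ∫ λ^α e^(-(λ / b + y) x) dU_n(λ)`, and this is the change of variables `λ ↦ λ / b + y` in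
the Gamma mixture over `U_{n+1}`: the weight `λ^(-q)` in `U_{n+1}` cancels the factor `λ^q` of
the Gamma density.
-/

open MeasureTheory Set

noncomputable def nextMix (α β b y : ℝ) (U : Measure ℝ) : Measure ℝ :=
  let V1 := U.withDensity fun t => ENNReal.ofReal (t ^ α)
  let V2 := V1.map fun t => t / b + y
  let V3 := V2.withDensity fun t => ENNReal.ofReal (t ^ (-(α + β)))
  (V3 Set.univ)⁻¹ • V3

open Real

lemma setIntegral_Ioi_eq_setIntegral_Ioi_zero_add (f : ℝ → ℝ) (c : ℝ) :
    ∫ s in Ioi c, f s = ∫ w in Ioi 0, f (w + c) := by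
  have h := (measurePreserving_add_right volume c).setIntegral_preimage_emb
    (measurableEmbedding_addRight c) f (Ioi c)
  rw [preimage_add_const_Ioi, sub_self] at h
  exact h.symm

lemma integrableOn_Ioi_of_integrableOn_Ioi_zero_add {f : ℝ → ℝ} {c : ℝ}
    (h : IntegrableOn (fun w => f (w + c)) (Ioi 0)) : IntegrableOn f (Ioi c) := by
  have h' := (measurePreserving_add_right volume c).integrableOn_comp_preimage
    (measurableEmbedding_addRight c) (f := f) (s := Ioi c)
  rw [preimage_add_const_Ioi, sub_self] at h'
  exact h'.mp h

lemma integrableOn_rpow_mul_exp_neg_mul_Ioi {a r : ℝ} (ha : 0 < a) (hr : 0 < r) :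
    IntegrableOn (fun w : ℝ => w ^ (a - 1) * exp (-(r * w))) (Ioi 0) := by
  simpa [neg_mul] using integrableOn_rpow_mul_exp_neg_mul_rpow (p := 1) (by linarith) one_pos hr

lemma sub_rpow_mul_exp_add_div {β b t x w : ℝ} (hb : 0 < b) (hw : 0 ≤ w) :
    (b * (w + x / b) - x) ^ (β - 1) * exp (-(t * (w + x / b)))
      = b ^ (β - 1) * exp (-(t * (x / b))) * (w ^ (β - 1) * exp (-(t * w))) := by
  rw [show b * (w + x / b) - x = b * w by field_simp; ring, mul_rpow hb.le hw,
    mul_add, neg_add, exp_add]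
  ring

lemma integrableOn_sub_rpow_mul_exp {β b t : ℝ} (hβ : 0 < β) (hb : 0 < b) (ht : 0 < t) (x : ℝ) :
    IntegrableOn (fun s => (b * s - x) ^ (β - 1) * exp (-(t * s))) (Ioi (x / b)) :=
  integrableOn_Ioi_of_integrableOn_Ioi_zero_add <|
    (IntegrableOn.congr_fun ((integrableOn_rpow_mul_exp_neg_mul_Ioi hβ ht).const_mul _)
      (fun _ hw => (sub_rpow_mul_exp_add_div hb (le_of_lt hw)).symm) measurableSet_Ioi)

lemma integral_sub_rpow_mul_exp {β b t : ℝ} (hβ : 0 < β) (hb : 0 < b) (ht : 0 < t) (x : ℝ) :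
    ∫ s in Ioi (x / b), (b * s - x) ^ (β - 1) * exp (-(t * s))
      = b ^ (β - 1) * Gamma β * t ^ (-β) * exp (-(t * (x / b))) := by
  rw [setIntegral_Ioi_eq_setIntegral_Ioi_zero_add,
    setIntegral_congr_fun measurableSet_Ioi fun _ hw => sub_rpow_mul_exp_add_div hb (le_of_lt hw),
    integral_const_mul, integral_rpow_mul_exp_neg_mul_Ioi hβ ht, one_div, inv_rpow ht.le,
    ← rpow_neg ht.le]
  ring

lemma integral_pos_of_ae_pos {α : Type*} [MeasurableSpace α] {μ : Measure α} [NeZero μ]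
    {f : α → ℝ} (hf : ∀ᵐ x ∂μ, 0 < f x) (hfi : Integrable f μ) : 0 < ∫ x, f x ∂μ := by
  have hsupp : Function.support f =ᵐ[μ] univ :=
    hf.mono fun x h => propext (iff_of_true h.ne' trivial)
  rw [integral_pos_iff_support_of_nonneg_ae (hf.mono fun _ h => h.le) hfi, measure_congr hsupp]
  exact Measure.measure_univ_pos.mpr (NeZero.ne μ)

lemma integrable_of_ae_mem_of_continuousOn {μ : Measure ℝ} [IsFiniteMeasure μ] {K : Set ℝ}
    {f : ℝ → ℝ} (hK : IsCompact K) (hμ : ∀ᵐ t ∂μ, t ∈ K) (hf : ContinuousOn f K) :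
    Integrable f μ := by
  rw [← Measure.restrict_eq_self_of_ae_mem hμ]
  exact hf.integrableOn_compact hK

lemma pKer_eq_indicator {α β b x : ℝ} (hb : 0 < b) (hx : 0 ≤ x) (s : ℝ) :
    pKer α β b s x = (Ici (x / b)).indicator (fun s => (b * s) ^ (1 - (α + β)) * x ^ (α - 1)
      * (b * s - x) ^ (β - 1) / (Gamma α * Gamma β / Gamma (α + β))) s := by
  have hmem : s ∈ Ici (x / b) ↔ 0 ≤ x ∧ x ≤ b * s := by
    rw [mem_Ici, div_le_iff₀' hb]; exact ⟨fun h => ⟨hx, h⟩, And.right⟩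
  by_cases h : s ∈ Ici (x / b)
  · rw [indicator_of_mem h, pKer, if_pos (hmem.mp h)]
  · rw [indicator_of_notMem h, pKer, if_neg (mt hmem.mpr h)]

lemma setIntegral_pKer_mul {α β b x cn : ℝ} (hb : 0 < b) (hx : 0 < x) {f H : ℝ → ℝ}
    (hf : ∀ s ∈ Ioi (0 : ℝ), f s = cn * s ^ (α + β - 1) * H s) :
    ∫ s in Ioi (0 : ℝ), pKer α β b s x * f s
      = cn * b ^ (1 - (α + β)) * x ^ (α - 1) / (Gamma α * Gamma β / Gamma (α + β))
        * ∫ s in Ioi (x / b), (b * s - x) ^ (β - 1) * H s := by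
  set C := cn * b ^ (1 - (α + β)) * x ^ (α - 1) / (Gamma α * Gamma β / Gamma (α + β))
  have hsub : Ici (x / b) ⊆ Ioi 0 := fun s hs => (div_pos hx hb).trans_le hs
  calc ∫ s in Ioi (0 : ℝ), pKer α β b s x * f s
      = ∫ s in Ioi (0 : ℝ),
          (Ici (x / b)).indicator (fun s => C * ((b * s - x) ^ (β - 1) * H s)) s := by
        refine setIntegral_congr_fun measurableSet_Ioi fun s hs => ?_
        rw [pKer_eq_indicator hb hx.le, hf s hs]
        by_cases h : s ∈ Ici (x / b)
        · have hs1 : s ^ (1 - (α + β)) * s ^ (α + β - 1) = 1 := by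
            rw [← rpow_add hs]; norm_num
          rw [indicator_of_mem h, indicator_of_mem h, mul_rpow hb.le (le_of_lt hs)]
          linear_combination (C * ((b * s - x) ^ (β - 1) * H s)) * hs1
        · rw [indicator_of_notMem h, indicator_of_notMem h, zero_mul]
    _ = ∫ s in Ioi (x / b), C * ((b * s - x) ^ (β - 1) * H s) := by
        rw [setIntegral_indicator measurableSet_Ici, inter_eq_right.mpr hsub,
          integral_Ici_eq_integral_Ioi]
    _ = C * ∫ s in Ioi (x / b), (b * s - x) ^ (β - 1) * H s := integral_const_mul _ _

section Mixture

variable {β b q u o x : ℝ} {U : Measure ℝ} [IsFiniteMeasure U]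

lemma integrable_sub_rpow_mul_rpow_mul_exp (hβ : 0 < β) (hb : 0 < b) (hu : 0 < u) (hx : 0 ≤ x)
    (hU : ∀ᵐ t ∂U, t ∈ Icc u o) :
    Integrable (fun z : ℝ × ℝ => (b * z.1 - x) ^ (β - 1) * (z.2 ^ q * exp (-(z.2 * z.1))))
      ((volume.restrict (Ioi (x / b))).prod U) := by
  obtain ⟨C, hC⟩ := isCompact_Icc.exists_bound_of_continuousOn (f := fun t : ℝ => t ^ q)
    (continuousOn_id.rpow_const fun t ht => Or.inl (hu.trans_le ht.1).ne')
  refine ((integrableOn_sub_rpow_mul_exp hβ hb hu x).mul_prod (integrable_const C)).mono'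
    (by fun_prop) ?_
  filter_upwards [Measure.quasiMeasurePreserving_fst.ae (ae_restrict_mem measurableSet_Ioi),
    Measure.quasiMeasurePreserving_snd.ae hU] with ⟨s, t⟩ (hs : x / b < s) (ht : t ∈ Icc u o)
  have hs0 : 0 ≤ s := (div_nonneg hx hb.le).trans hs.le
  have hbs : 0 ≤ b * s - x := by rw [div_lt_iff₀' hb] at hs; linarith
  rw [norm_mul, norm_mul, norm_of_nonneg (rpow_nonneg hbs _), norm_of_nonneg (exp_pos _).le]
  calc (b * s - x) ^ (β - 1) * (‖t ^ q‖ * exp (-(t * s)))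
      ≤ (b * s - x) ^ (β - 1) * (C * exp (-(u * s))) := by
        gcongr
        exacts [(norm_nonneg _).trans (hC t ht), hC t ht, ht.1]
    _ = (b * s - x) ^ (β - 1) * exp (-(u * s)) * C := by ring

lemma setIntegral_sub_rpow_mul_integral_rpow_mul_exp (hβ : 0 < β) (hb : 0 < b) (hu : 0 < u)
    (hx : 0 ≤ x) (hU : ∀ᵐ t ∂U, t ∈ Icc u o) :
    ∫ s in Ioi (x / b), (b * s - x) ^ (β - 1) * ∫ t, t ^ q * exp (-(t * s)) ∂U
      = b ^ (β - 1) * Gamma β * ∫ t, t ^ (q - β) * exp (-(t * (x / b))) ∂U := by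
  calc ∫ s in Ioi (x / b), (b * s - x) ^ (β - 1) * ∫ t, t ^ q * exp (-(t * s)) ∂U
      = ∫ s in Ioi (x / b), ∫ t, (b * s - x) ^ (β - 1) * (t ^ q * exp (-(t * s))) ∂U := by
        simp only [integral_const_mul]
    _ = ∫ t, (∫ s in Ioi (x / b), (b * s - x) ^ (β - 1) * (t ^ q * exp (-(t * s)))) ∂U :=
        integral_integral_swap (integrable_sub_rpow_mul_rpow_mul_exp hβ hb hu hx hU)
    _ = ∫ t, b ^ (β - 1) * Gamma β * (t ^ (q - β) * exp (-(t * (x / b)))) ∂U := by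
        refine integral_congr_ae ?_
        filter_upwards [hU] with t ht
        have ht0 : 0 < t := hu.trans_le ht.1
        simp only [mul_left_comm _ (t ^ q), integral_const_mul]
        rw [integral_sub_rpow_mul_exp hβ hb ht0, sub_eq_add_neg q, rpow_add ht0]
        ring
    _ = b ^ (β - 1) * Gamma β * ∫ t, t ^ (q - β) * exp (-(t * (x / b))) ∂U :=
        integral_const_mul _ _

end Mixture

noncomputable def nextMixMass (α β b y : ℝ) (U : Measure ℝ) : ℝ :=
  ∫ t, t ^ α * (t / b + y) ^ (-(α + β)) ∂U

lemma nextMixMass_pos {α β b y u o : ℝ} (hb : 0 ≤ b) (hy : 0 < y) (hu : 0 < u) {U : Measure ℝ}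
    [IsFiniteMeasure U] [NeZero U] (hU : ∀ᵐ t ∂U, t ∈ Icc u o) : 0 < nextMixMass α β b y U := by
  have hcont : ContinuousOn (fun t => t ^ α * (t / b + y) ^ (-(α + β))) (Ioi 0) := by
    refine ContinuousOn.mul ?_ ?_ <;>
      exact ContinuousOn.rpow_const (by fun_prop) fun t (ht : 0 < t) => Or.inl (by positivity)
  refine integral_pos_of_ae_pos ?_ (integrable_of_ae_mem_of_continuousOn isCompact_Icc hU
    (hcont.mono fun t ht => hu.trans_le ht.1))
  filter_upwards [hU] with t ht
  have := hu.trans_le ht.1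
  positivity

/-- No finiteness is needed: if the normalising mass is infinite, both sides are `0`. -/
lemma integral_nextMix {α β b y : ℝ} (hb : 0 ≤ b) (hy : 0 ≤ y) {U : Measure ℝ}
    (hU : ∀ᵐ t ∂U, 0 ≤ t) {f : ℝ → ℝ} (hf : Measurable f) :
    ∫ s, f s ∂nextMix α β b y U
      = (nextMixMass α β b y U)⁻¹ * ∫ t, t ^ α * (t / b + y) ^ (-(α + β)) * f (t / b + y) ∂U := by
  set V := ((U.withDensity fun t => ENNReal.ofReal (t ^ α)).map fun t => t / b + y).withDensity
    fun t => ENNReal.ofReal (t ^ (-(α + β)))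
  have hV : ∀ g : ℝ → ℝ, Measurable g →
      ∫ s, g s ∂V = ∫ t, t ^ α * (t / b + y) ^ (-(α + β)) * g (t / b + y) ∂U := by
    intro g hg
    rw [integral_withDensity_eq_integral_toReal_smul (by fun_prop)
        (ae_of_all _ fun _ => ENNReal.ofReal_lt_top),
      integral_map (by fun_prop) (by fun_prop),
      integral_withDensity_eq_integral_toReal_smul (by fun_prop)
        (ae_of_all _ fun _ => ENNReal.ofReal_lt_top)]
    refine integral_congr_ae ?_
    filter_upwards [hU] with t ht
    have hφ : 0 ≤ t / b + y := by positivity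
    simp only [smul_eq_mul, ENNReal.toReal_ofReal (rpow_nonneg ht _),
      ENNReal.toReal_ofReal (rpow_nonneg hφ _), mul_assoc]
  have hVuniv : V.real univ = nextMixMass α β b y U := by
    simpa [nextMixMass] using hV (fun _ => 1) measurable_const
  change ∫ s, f s ∂((V univ)⁻¹ • V) = _
  rw [integral_smul_measure, ENNReal.toReal_inv, ← measureReal_def, hVuniv, hV f hf, smul_eq_mul]

lemma integral_rpow_mul_exp_nextMix {α β b y : ℝ} (hb : 0 ≤ b) (hy : 0 < y) {U : Measure ℝ}
    (hU : ∀ᵐ t ∂U, 0 ≤ t) (x : ℝ) :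
    ∫ s, s ^ (α + β) * exp (-(s * x)) ∂nextMix α β b y U
      = (nextMixMass α β b y U)⁻¹ * (exp (-(x * y)) * ∫ t, t ^ α * exp (-(t * (x / b))) ∂U) := by
  rw [integral_nextMix hb hy.le hU (by fun_prop)]
  congr 1
  rw [← integral_const_mul]
  refine integral_congr_ae ?_
  filter_upwards [hU] with t ht
  have hφ : 0 < t / b + y := by positivity
  rw [mul_assoc, ← mul_assoc ((t / b + y) ^ _), ← rpow_add hφ, neg_add_cancel, rpow_zero, one_mul,
    show (t / b + y) * x = x * y + t * (x / b) by ring, neg_add, exp_add]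
  ring

theorem filter_step_mixed_gamma_general
    (α β b : ℝ) (hα : 0 < α) (hβ : 0 < β) (hb : 0 < b)
    (u o : ℝ) (hu : 0 < u)
    (U : Measure ℝ) [IsProbabilityMeasure U] (hUsupp : U (Set.Icc u o)ᶜ = 0)
    (yobs : ℝ) (hy : 0 < yobs)
    (πn πn1 : ℝ → ℝ) (cn cn1 : ℝ) (hcn : 0 < cn) (hcn1 : 0 < cn1)
    (hπn : ∀ x ∈ Set.Ioi (0 : ℝ),
      πn x = cn * x ^ (α + β - 1) * ∫ t, t ^ (α + β) * Real.exp (-(t * x)) ∂U)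
    (hrec : ∀ x ∈ Set.Ioi (0 : ℝ),
      πn1 x = gObs β x yobs * (∫ s in Set.Ioi (0 : ℝ), pKer α β b s x * πn s) / cn1) :
    ∃ c' : ℝ, 0 < c' ∧ ∀ x ∈ Set.Ioi (0 : ℝ),
      πn1 x = c' * x ^ (α + β - 1) *
        ∫ t, t ^ (α + β) * Real.exp (-(t * x)) ∂(nextMix α β b yobs U) := by
  have hU : ∀ᵐ t ∂U, t ∈ Icc u o := mem_ae_iff.mpr hUsupp
  have hU0 : ∀ᵐ t ∂U, 0 ≤ t := hU.mono fun t ht => hu.le.trans ht.1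
  have hZ := nextMixMass_pos (α := α) (β := β) hb.le hy hu hU
  refine ⟨cn * b ^ (-α) * yobs ^ (β - 1) * nextMixMass α β b yobs U
    / (Gamma α * Gamma β / Gamma (α + β) * cn1), by positivity, fun x hx => ?_⟩
  rw [hrec x hx, setIntegral_pKer_mul hb hx hπn,
    setIntegral_sub_rpow_mul_integral_rpow_mul_exp hβ hb hu (le_of_lt hx) hU, add_sub_cancel_right,
    integral_rpow_mul_exp_nextMix hb.le hy hU0, gObs]
  have hxx : x ^ β * x ^ (α - 1) = x ^ (α + β - 1) := by
    rw [← rpow_add hx]; ring_nf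
  have hbb : b ^ (1 - (α + β)) * b ^ (β - 1) = b ^ (-α) := by
    rw [← rpow_add hb]; ring_nf
  rw [← hxx, ← hbb]
  field_simp

/-- One step of the filter recursion maps a mixed Gamma density with mixing
measure `U_n` to a mixed Gamma density with mixing measure `U_{n+1} = nextMix`. -/
theorem filter_step_mixed_gamma
    (α β b : ℝ) (hα : 0 < α) (hβ : 0 < β) (hb : 0 < b)
    (u o : ℝ) (hu : 0 < u) (huo : u ≤ o)
    (U : Measure ℝ) [IsProbabilityMeasure U] (hUsupp : U (Set.Icc u o)ᶜ = 0)
    (yobs : ℝ) (hy : 0 < yobs)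
    (πn πn1 : ℝ → ℝ) (cn cn1 : ℝ) (hcn : 0 < cn) (hcn1 : 0 < cn1)
    (hπn : ∀ x ∈ Set.Ioi (0 : ℝ),
      πn x = cn * x ^ (α + β - 1) * ∫ t, t ^ (α + β) * Real.exp (-(t * x)) ∂U)
    (hrec : ∀ x ∈ Set.Ioi (0 : ℝ),
      πn1 x = gObs β x yobs * (∫ s in Set.Ioi (0 : ℝ), pKer α β b s x * πn s) / cn1)
    (hnorm : (∫ x in Set.Ioi (0 : ℝ), πn1 x) = 1) :
    ∃ c' : ℝ, 0 < c' ∧ ∀ x ∈ Set.Ioi (0 : ℝ),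
      πn1 x = c' * x ^ (α + β - 1) *
        ∫ t, t ^ (α + β) * Real.exp (-(t * x)) ∂(nextMix α β b yobs U) :=
  filter_step_mixed_gamma_general α β b hα hβ hb u o hu U hUsupp yobs hy πn πn1 cn cn1 hcn hcn1 hπn
    hrec
end

section
/- Assume E(X_0^β) < ∞. Then for every δ ≥ 0 and every j ≥ 1, P(b^j Y_j ≤ δ^j) ≤ (δ^{jβ}/Γ(β+1)) · E(W_1^β)^j · E(X_0^β). -/
/-!
Unrolling the recursion gives `X_j = b^j X_0 W_1 ⋯ W_j`, and almost surely every `W_i` lies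
in `(0, 1)`, so `b^j Y_j ≤ δ^j` forces `G_j ≤ δ^j X_0 W_1 ⋯ W_j`. The variable `G_j ~ Γ(1, β)`
is independent of the right-hand side, and bounding `e^{-x}` by `1` in its density gives
`P(G_j ≤ v) ≤ v^β / Γ(β + 1)`. Integrating this against the law of `δ^j X_0 W_1 ⋯ W_j` and
factorising `E[(X_0 W_1 ⋯ W_j)^β]` by independence yields the bound.
-/

open MeasureTheory Set

/-- The Beta distribution `Beta(a, c)` on `(0, 1)`. -/
noncomputable def betaMeas (a c : ℝ) : Measure ℝ :=
  (volume : Measure ℝ).withDensity fun x =>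
    ENNReal.ofReal
      (if 0 < x ∧ x < 1 then
        Real.Gamma (a + c) / (Real.Gamma a * Real.Gamma c) * x ^ (a - 1) * (1 - x) ^ (c - 1)
      else 0)

/-- The Gamma distribution `Γ(lam, r)` on `(0, ∞)` with rate `lam` and shape `r`. -/
noncomputable def gammaMeas (lam r : ℝ) : Measure ℝ :=
  (volume : Measure ℝ).withDensity fun x =>
    ENNReal.ofReal
      (if 0 < x then lam ^ r * x ^ (r - 1) * Real.exp (-(lam * x)) / Real.Gamma r else 0)

open ProbabilityTheory

lemma ae_mem_Ioo_betaMeas (a c : ℝ) : ∀ᵐ x ∂betaMeas a c, x ∈ Ioo 0 1 := by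
  change betaMeas a c (Ioo 0 1)ᶜ = 0
  rw [betaMeas, withDensity_apply _ measurableSet_Ioo.compl]
  exact setLIntegral_eq_zero measurableSet_Ioo.compl fun x hx => by
    simp [if_neg (show ¬(0 < x ∧ x < 1) from hx)]

lemma gammaMeas_Iic_zero (lam r : ℝ) : gammaMeas lam r (Iic 0) = 0 := by
  rw [gammaMeas, withDensity_apply _ measurableSet_Iic]
  exact setLIntegral_eq_zero measurableSet_Iic fun x (hx : x ≤ 0) => by simp [hx.not_gt]

lemma gammaMeas_Ioc_zero_le {lam r : ℝ} (hlam : 0 ≤ lam) (hr : 0 < r) {t : ℝ} (ht : 0 ≤ t) :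
    gammaMeas lam r (Ioc 0 t) ≤ ENNReal.ofReal (lam ^ r / Real.Gamma (r + 1) * t ^ r) := by
  have hint : IntegrableOn (fun x : ℝ => lam ^ r / Real.Gamma r * x ^ (r - 1)) (Ioc 0 t) :=
    ((intervalIntegral.intervalIntegrable_rpow' (by linarith)).1).const_mul _
  calc gammaMeas lam r (Ioc 0 t)
      ≤ ∫⁻ x in Ioc 0 t, ENNReal.ofReal (lam ^ r / Real.Gamma r * x ^ (r - 1)) := by
        rw [gammaMeas, withDensity_apply _ measurableSet_Ioc]
        refine setLIntegral_mono' measurableSet_Ioc fun x hx => ENNReal.ofReal_le_ofReal ?_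
        have hexp : Real.exp (-(lam * x)) ≤ 1 :=
          Real.exp_le_one_iff.2 (by nlinarith [hx.1])
        have hx0 := hx.1
        rw [if_pos hx0, div_mul_eq_mul_div, mul_div_right_comm]
        exact mul_le_of_le_one_right (by positivity) hexp
    _ = ENNReal.ofReal (lam ^ r / Real.Gamma (r + 1) * t ^ r) := by
        rw [← ofReal_integral_eq_lintegral_ofReal hint
          ((ae_restrict_iff' measurableSet_Ioc).2 (.of_forall fun x hx => by
            have := hx.1; positivity)),
          ← intervalIntegral.integral_of_le ht, intervalIntegral.integral_const_mul,
          integral_rpow (.inl (by linarith)), sub_add_cancel, Real.zero_rpow hr.ne',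
          Real.Gamma_add_one hr.ne']
        congr 1
        field_simp
        ring

lemma gammaMeas_Iic_le {lam r : ℝ} (hlam : 0 ≤ lam) (hr : 0 < r) (t : ℝ) :
    gammaMeas lam r (Iic t) ≤
      ENNReal.ofReal (lam ^ r / Real.Gamma (r + 1)) * ENNReal.ofReal t ^ r := by
  rcases le_or_gt t 0 with ht | ht
  · exact ((measure_mono (Iic_subset_Iic.2 ht)).trans (gammaMeas_Iic_zero lam r).le).trans
      zero_le
  · rw [← Iic_union_Ioc_eq_Iic ht.le, ENNReal.ofReal_rpow_of_pos ht,
      ← ENNReal.ofReal_mul (div_nonneg (by positivity) (Real.Gamma_pos_of_pos (by linarith)).le)]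
    calc gammaMeas lam r (Iic 0 ∪ Ioc 0 t)
        ≤ gammaMeas lam r (Iic 0) + gammaMeas lam r (Ioc 0 t) := measure_union_le _ _
      _ ≤ _ := by
        rw [gammaMeas_Iic_zero, zero_add]
        exact gammaMeas_Ioc_zero_le hlam hr ht.le

lemma ENNReal.ofReal_mul_prod_rpow {ι : Type*} {s : Finset ι} {c r : ℝ} {x : ι → ℝ}
    (hc : 0 ≤ c) (hx : ∀ i ∈ s, 0 ≤ x i) (hr : 0 ≤ r) :
    ENNReal.ofReal (c * ∏ i ∈ s, x i) ^ r =
      ENNReal.ofReal c ^ r * ∏ i ∈ s, ENNReal.ofReal (x i) ^ r := by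
  rw [ENNReal.ofReal_mul hc, ENNReal.ofReal_prod_of_nonneg hx,
    ENNReal.mul_rpow_of_nonneg _ _ hr, ENNReal.prod_rpow_of_nonneg hr]

section

variable {Ω : Type*} [MeasurableSpace Ω] {P : Measure Ω}

lemma ProbabilityTheory.IndepFun.measure_le_eq_lintegral_Iic [IsFiniteMeasure P]
    {V G : Ω → ℝ} (hVG : IndepFun V G P) (hV : Measurable V) (hG : Measurable G) :
    P {ω | G ω ≤ V ω} = ∫⁻ ω, P.map G (Iic (V ω)) ∂P := by
  have hmeas : MeasurableSet {p : ℝ × ℝ | p.2 ≤ p.1} :=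
    measurableSet_le measurable_snd measurable_fst
  change P ((fun ω => (V ω, G ω)) ⁻¹' {p | p.2 ≤ p.1}) = _
  rw [← Measure.map_apply (hV.prodMk hG) hmeas,
    (indepFun_iff_map_prod_eq_prod_map_map hV.aemeasurable hG.aemeasurable).1 hVG,
    Measure.prod_apply hmeas, lintegral_map _ hV]
  · rfl
  · exact measurable_measure_prodMk_left hmeas

lemma ProbabilityTheory.iIndepFun.measure_le_mul_prod_le {ι : Type*} {F : ι → Ω → ℝ}
    (hF : iIndepFun F P) (hFm : ∀ i, Measurable (F i)) {s : Finset ι} {k : ι} (hk : k ∉ s)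
    {lam r : ℝ} (hlam : 0 ≤ lam) (hr : 0 < r) (hFk : P.map (F k) = gammaMeas lam r)
    (hs : ∀ i ∈ s, 0 ≤ᵐ[P] F i) {c : ℝ} (hc : 0 ≤ c) :
    P {ω | F k ω ≤ c * ∏ i ∈ s, F i ω} ≤
      ENNReal.ofReal (lam ^ r / Real.Gamma (r + 1)) * ENNReal.ofReal c ^ r *
        ∏ i ∈ s, ∫⁻ ω, ENNReal.ofReal (F i ω) ^ r ∂P := by
  have := hF.isProbabilityMeasure
  have hprod : Measurable fun ω => ∏ i ∈ s, F i ω := Finset.measurable_prod s fun i _ => hFm i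
  have hindep : IndepFun (fun ω => c * ∏ i ∈ s, F i ω) (F k) P := by
    have := (hF.indepFun_finsetProd_of_notMem hFm hk).comp (measurable_const_mul c)
      measurable_id
    simpa [Function.comp_def, Finset.prod_apply] using this
  have hpow : iIndepFun (fun i ω => ENNReal.ofReal (F i ω) ^ r) P :=
    hF.comp (fun _ x => ENNReal.ofReal x ^ r) fun _ => by fun_prop
  rw [hindep.measure_le_eq_lintegral_Iic (hprod.const_mul c) (hFm k), hFk, mul_assoc,
    ← lintegral_prod_eq_prod_lintegral_of_indepFun s _ hpow fun i => by fun_prop,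
    ← lintegral_const_mul _ (Finset.measurable_prod s fun i _ => by fun_prop),
    ← lintegral_const_mul _ (by fun_prop)]
  refine lintegral_mono_ae ?_
  filter_upwards [(Filter.eventually_all_finset s).2 hs] with ω hω
  rw [← ENNReal.ofReal_mul_prod_rpow hc hω hr.le]
  exact gammaMeas_Iic_le hlam hr _

lemma lintegral_ofReal_rpow_eq_ofReal_integral {f : Ω → ℝ} {r : ℝ} (hf : 0 ≤ᵐ[P] f)
    (hr : 0 ≤ r) (hint : Integrable (fun ω => f ω ^ r) P) :
    ∫⁻ ω, ENNReal.ofReal (f ω) ^ r ∂P = ENNReal.ofReal (∫ ω, f ω ^ r ∂P) := by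
  rw [ofReal_integral_eq_lintegral_ofReal hint (hf.mono fun ω hω => Real.rpow_nonneg hω r)]
  exact lintegral_congr_ae (hf.mono fun ω hω => ENNReal.ofReal_rpow_of_nonneg hω hr)

lemma ae_mem_Ioo_of_map_eq_betaMeas {W : Ω → ℝ} (hWm : Measurable W) {a c : ℝ}
    (hW : P.map W = betaMeas a c) : ∀ᵐ ω ∂P, W ω ∈ Ioo 0 1 :=
  ae_of_ae_map hWm.aemeasurable (hW ▸ ae_mem_Ioo_betaMeas a c)

lemma lintegral_ofReal_rpow_eq_of_map_eq_betaMeas [IsFiniteMeasure P] {W : ℕ → Ω → ℝ}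
    (hWm : ∀ n, Measurable (W n)) {a c r : ℝ} (hW : ∀ n, P.map (W n) = betaMeas a c)
    (hr : 0 ≤ r) (n : ℕ) :
    ∫⁻ ω, ENNReal.ofReal (W n ω) ^ r ∂P = ENNReal.ofReal (∫ ω, W 0 ω ^ r ∂P) := by
  have hW0 := ae_mem_Ioo_of_map_eq_betaMeas (hWm 0) (hW 0)
  have hint : Integrable (fun ω => W 0 ω ^ r) P := by
    refine .of_bound (by fun_prop) 1 (hW0.mono fun ω hω => ?_)
    rw [Real.norm_of_nonneg (Real.rpow_nonneg hω.1.le r)]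
    exact Real.rpow_le_one hω.1.le hω.2.le hr
  have hident : IdentDistrib (W n) (W 0) P P :=
    ⟨(hWm n).aemeasurable, (hWm 0).aemeasurable, (hW n).trans (hW 0).symm⟩
  rw [← lintegral_ofReal_rpow_eq_ofReal_integral (hW0.mono fun ω hω => hω.1.le) hr hint]
  exact (hident.comp (by fun_prop : Measurable fun x => ENNReal.ofReal x ^ r)).lintegral_eq

lemma measure_le_mul_mul_prod_le {W G : ℕ → Ω → ℝ} {Z : Ω → ℝ} (hWm : ∀ n, Measurable (W n))
    (hGm : ∀ n, Measurable (G n)) (hZm : Measurable Z)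
    (hindep : iIndepFun (Sum.elim W (Sum.elim G fun _ : Unit => Z)) P)
    {a c lam r : ℝ} (hlam : 0 ≤ lam) (hr : 0 < r) (hW : ∀ n, P.map (W n) = betaMeas a c)
    (hG : ∀ n, P.map (G n) = gammaMeas lam r) (hZ : 0 ≤ᵐ[P] Z)
    (hZint : Integrable (fun ω => Z ω ^ r) P) {d : ℝ} (hd : 0 ≤ d) (n m : ℕ) :
    P {ω | G n ω ≤ d * (Z ω * ∏ i ∈ Finset.range m, W i ω)} ≤
      ENNReal.ofReal (lam ^ r / Real.Gamma (r + 1)) * ENNReal.ofReal d ^ r *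
        (ENNReal.ofReal (∫ ω, Z ω ^ r ∂P) * ENNReal.ofReal (∫ ω, W 0 ω ^ r ∂P) ^ m) := by
  have := hindep.isProbabilityMeasure
  set F := Sum.elim W (Sum.elim G fun _ : Unit => Z)
  let s : Finset (ℕ ⊕ ℕ ⊕ Unit) := .cons (.inr (.inr ())) ((Finset.range m).map .inl) (by simp)
  have hFm : ∀ i, Measurable (F i) := by rintro (i | i | u) <;> simp [F, hWm, hGm, hZm]
  have hnonneg : ∀ i ∈ s, 0 ≤ᵐ[P] F i := by
    simp only [s, Finset.mem_cons, Finset.mem_map, Finset.mem_range]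
    rintro _ (rfl | ⟨i, -, rfl⟩)
    · exact hZ
    · exact (ae_mem_Ioo_of_map_eq_betaMeas (hWm i) (hW i)).mono fun ω hω => hω.1.le
  have hbound := hindep.measure_le_mul_prod_le hFm (k := .inr (.inl n)) (by simp [s]) hlam hr
    (hG n) hnonneg hd
  simpa [s, F, lintegral_ofReal_rpow_eq_of_map_eq_betaMeas hWm hW hr.le,
    lintegral_ofReal_rpow_eq_ofReal_integral hZ hr.le hZint] using hbound

end

lemma eq_pow_mul_prod_of_forall_succ {x w : ℕ → ℝ} {b : ℝ} (h : ∀ n, x (n + 1) = b * x n * w n)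
    (n : ℕ) : x n = b ^ n * x 0 * ∏ i ∈ Finset.range n, w i := by
  induction n with
  | zero => simp
  | succ n ih => rw [h, ih, Finset.prod_range_succ]; ring

theorem obs_small_probability_bound_general
    {Ω : Type*} [MeasurableSpace Ω] (P : Measure Ω) [IsProbabilityMeasure P]
    (α β b : ℝ) (hβ : 0 < β) (hb : 0 < b)
    (W G : ℕ → Ω → ℝ) (X0 : Ω → ℝ) (X Y : ℕ → Ω → ℝ)
    (hWm : ∀ n, Measurable (W n)) (hGm : ∀ n, Measurable (G n)) (hX0m : Measurable X0)
    (hW : ∀ n, Measure.map (W n) P = betaMeas α β)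
    (hG : ∀ n, Measure.map (G n) P = gammaMeas 1 β)
    (hindep : ProbabilityTheory.iIndepFun
      (Sum.elim W (Sum.elim G fun _ : Unit => X0)) P)
    (hX0pos : ∀ ω, 0 < X0 ω)
    (hX0 : X 0 = X0) (hXrec : ∀ n ω, X (n + 1) ω = b * X n ω * W n ω)
    (hY : ∀ n ω, Y (n + 1) ω = G n ω / X (n + 1) ω)
    (hX0int : Integrable (fun ω => X0 ω ^ β) P)
    (δ : ℝ) (hδ : 0 ≤ δ) (j : ℕ) (hj : 1 ≤ j) :
    (P {ω | b ^ j * Y j ω ≤ δ ^ j}).toReal ≤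
      (δ ^ j) ^ β / Real.Gamma (β + 1) * (∫ ω, W 0 ω ^ β ∂P) ^ j * ∫ ω, X0 ω ^ β ∂P := by
  obtain ⟨k, rfl⟩ : ∃ k, j = k + 1 := ⟨j - 1, by omega⟩
  have hWmem : ∀ᵐ ω ∂P, ∀ n, W n ω ∈ Ioo 0 1 :=
    ae_all_iff.2 fun n => ae_mem_Ioo_of_map_eq_betaMeas (hWm n) (hW n)
  have hevent : P {ω | b ^ (k + 1) * Y (k + 1) ω ≤ δ ^ (k + 1)} ≤
      P {ω | G k ω ≤ δ ^ (k + 1) * (X0 ω * ∏ i ∈ Finset.range (k + 1), W i ω)} := by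
    refine measure_mono_ae (hWmem.mono fun ω hω (hle : _ ≤ _) => ?_)
    have hpos : 0 < X0 ω * ∏ i ∈ Finset.range (k + 1), W i ω :=
      mul_pos (hX0pos ω) (Finset.prod_pos fun i _ => (hω i).1)
    rwa [hY, eq_pow_mul_prod_of_forall_succ (x := (X · ω)) (w := (W · ω)) (hXrec · ω), hX0,
      mul_assoc, ← mul_div_assoc, mul_div_mul_left _ _ (by positivity), div_le_iff₀ hpos] at hle
  have hsmall := measure_le_mul_mul_prod_le hWm hGm hX0m hindep zero_le_one hβ hW hG
    (.of_forall fun ω => (hX0pos ω).le) hX0int (pow_nonneg hδ (k + 1)) k (k + 1)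
  have hEW : 0 ≤ ∫ ω, W 0 ω ^ β ∂P :=
    integral_nonneg_of_ae (hWmem.mono fun ω h => Real.rpow_nonneg (h 0).1.le β)
  have hEX : 0 ≤ ∫ ω, X0 ω ^ β ∂P := integral_nonneg fun ω => Real.rpow_nonneg (hX0pos ω).le β
  have hΓ : 0 < Real.Gamma (β + 1) := Real.Gamma_pos_of_pos (by linarith)
  refine ENNReal.toReal_le_of_le_ofReal (by positivity) ((hevent.trans hsmall).trans_eq ?_)
  rw [Real.one_rpow, ENNReal.ofReal_rpow_of_nonneg (by positivity) hβ.le,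
    ← ENNReal.ofReal_pow hEW, ← ENNReal.ofReal_mul hEX, ← ENNReal.ofReal_mul (by positivity),
    ← ENNReal.ofReal_mul (by positivity)]
  congr 1
  ring

/-- In the hidden Markov model `X_n = b X_{n-1} W_n`, `Y_n = G_n / X_n`
(here `W n`, `G n` stand for `W_{n+1}`, `G_{n+1}`), if `E(X₀^β) < ∞` then for
every `δ ≥ 0` and `j ≥ 1`, `P(b^j Y_j ≤ δ^j) ≤ (δ^{jβ}/Γ(β+1)) E(W₁^β)^j E(X₀^β)`. -/
theorem obs_small_probability_bound
    {Ω : Type*} [MeasurableSpace Ω] (P : Measure Ω) [IsProbabilityMeasure P]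
    (α β b : ℝ) (hα : 0 < α) (hβ : 0 < β) (hb : 0 < b)
    (W G : ℕ → Ω → ℝ) (X0 : Ω → ℝ) (X Y : ℕ → Ω → ℝ)
    (hWm : ∀ n, Measurable (W n)) (hGm : ∀ n, Measurable (G n)) (hX0m : Measurable X0)
    (hW : ∀ n, Measure.map (W n) P = betaMeas α β)
    (hG : ∀ n, Measure.map (G n) P = gammaMeas 1 β)
    (hindep : ProbabilityTheory.iIndepFun
      (Sum.elim W (Sum.elim G fun _ : Unit => X0)) P)
    (hX0pos : ∀ ω, 0 < X0 ω)
    (hX0 : X 0 = X0) (hXrec : ∀ n ω, X (n + 1) ω = b * X n ω * W n ω)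
    (hY : ∀ n ω, Y (n + 1) ω = G n ω / X (n + 1) ω)
    (hX0int : Integrable (fun ω => X0 ω ^ β) P)
    (δ : ℝ) (hδ : 0 ≤ δ) (j : ℕ) (hj : 1 ≤ j) :
    (P {ω | b ^ j * Y j ω ≤ δ ^ j}).toReal ≤
      (δ ^ j) ^ β / Real.Gamma (β + 1) * (∫ ω, W 0 ω ^ β ∂P) ^ j * ∫ ω, X0 ω ^ β ∂P :=
  obs_small_probability_bound_general P α β b hβ hb W G X0 X Y hWm hGm hX0m hW hG hindep hX0pos hX0
    hXrec hY hX0int δ hδ j hj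
end

section
/- Let U be a probability measure supported in [u, ∞) for some u > 0, and let π(x) = c x^{q−1} ∫ λ^q e^{−λx} dU(λ) (c > 0 the normalizing constant) be the corresponding mixed Gamma probability density on (0,∞). Then ∫_0^∞ ∫_0^∞ |x_1 − x_2| π(x_1) π(x_2) dx_1 dx_2 ≤ √(2q(q+1)) / u. -/
open MeasureTheory Set

/-! By AM–GM, `|x - y| ≤ ((x - y)² + B) / (2√B)` for every `B > 0`; integrating against
`π(x) π(y)` bounds the mean absolute difference by `(2 E[X²] - 2 E[X]² + B) / (2√B)`, which is
at most `√B` once `B = 2M` with `E[X²] ≤ M`.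

For the mixed Gamma density, Tonelli and the Gamma integral give
`∫ x^p π(x) dx = c Γ(q + p) ∫ t^(-p) dU(t)`. The case `p = 0` is the normalisation `c Γ(q) = 1`,
and then `p = 2` gives `E[X²] = q (q + 1) ∫ t^(-2) dU(t) ≤ q (q + 1) / u²`. -/

lemma abs_le_sq_add_div_two_sqrt {B : ℝ} (hB : 0 < B) (y : ℝ) :
    |y| ≤ (y ^ 2 + B) / (2 * √B) := by
  have hsB : 0 < √B := Real.sqrt_pos.mpr hB
  rw [le_div_iff₀ (by positivity)]
  nlinarith [sq_nonneg (|y| - √B), Real.sq_sqrt hB.le, sq_abs y]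

section Moments

variable {μ : Measure ℝ} {f : ℝ → ℝ}

lemma MeasureTheory.Integrable.id_mul_of_sq_mul (hf : Integrable f μ)
    (hf2 : Integrable (fun x ↦ x ^ 2 * f x) μ) : Integrable (fun x ↦ x * f x) μ := by
  refine (hf.add hf2).mono (aestronglyMeasurable_id.mul hf.1) (ae_of_all _ fun x ↦ ?_)
  simp only [Pi.add_apply, ← one_add_mul, norm_mul, Real.norm_eq_abs,
    abs_of_nonneg (by positivity : (0 : ℝ) ≤ 1 + x ^ 2)]
  gcongr
  nlinarith [sq_abs x, sq_nonneg (|x| - 1)]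

lemma MeasureTheory.Integrable.quadratic_mul (hf : Integrable f μ)
    (hf2 : Integrable (fun x ↦ x ^ 2 * f x) μ) (a b c : ℝ) :
    Integrable (fun x ↦ (a + b * x + c * x ^ 2) * f x) μ := by
  refine (((hf.const_mul a).add ((hf.id_mul_of_sq_mul hf2).const_mul b)).add
    (hf2.const_mul c)).congr (ae_of_all _ fun x ↦ ?_)
  simp only [Pi.add_apply]
  ring

lemma integral_quadratic_mul (hf : Integrable f μ) (hf1 : ∫ x, f x ∂μ = 1)
    (hf2 : Integrable (fun x ↦ x ^ 2 * f x) μ) (a b c : ℝ) :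
    ∫ x, (a + b * x + c * x ^ 2) * f x ∂μ =
      a + b * ∫ x, x * f x ∂μ + c * ∫ x, x ^ 2 * f x ∂μ := by
  have h₀ : Integrable (fun x ↦ a * f x) μ := hf.const_mul a
  have h₁ : Integrable (fun x ↦ b * (x * f x)) μ := (hf.id_mul_of_sq_mul hf2).const_mul b
  have h₂ : Integrable (fun x ↦ c * (x ^ 2 * f x)) μ := hf2.const_mul c
  simp_rw [add_mul, mul_assoc]
  rw [integral_add (f := fun x ↦ a * f x + b * (x * f x)) (h₀.add h₁) h₂, integral_add h₀ h₁,
    integral_const_mul, integral_const_mul, integral_const_mul, hf1, mul_one]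

lemma integral_integral_abs_sub_mul_le (hf0 : 0 ≤ᵐ[μ] f) (hf : Integrable f μ)
    (hf1 : ∫ x, f x ∂μ = 1) (hf2 : Integrable (fun x ↦ x ^ 2 * f x) μ) {M : ℝ}
    (hM : ∫ x, x ^ 2 * f x ∂μ ≤ M) (hM0 : 0 < M) :
    ∫ x, ∫ y, |x - y| * f x * f y ∂μ ∂μ ≤ √(2 * M) := by
  set B := 2 * M
  have hB : 0 < B := by positivity
  set m₁ := ∫ x, x * f x ∂μ
  set m₂ := ∫ x, x ^ 2 * f x ∂μ
  have hinner : ∀ᵐ x ∂μ, ∫ y, |x - y| * f x * f y ∂μ ≤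
      ((m₂ + B) + (-2 * m₁) * x + 1 * x ^ 2) * f x / (2 * √B) := by
    filter_upwards [hf0] with x hx
    calc ∫ y, |x - y| * f x * f y ∂μ
        ≤ ∫ y, f x / (2 * √B) * (((x ^ 2 + B) + (-2 * x) * y + 1 * y ^ 2) * f y) ∂μ := by
          refine integral_mono_of_nonneg ?_ ((hf.quadratic_mul hf2 _ _ _).const_mul _) ?_
          · filter_upwards [hf0] with y hy
            exact mul_nonneg (mul_nonneg (abs_nonneg _) hx) hy
          · filter_upwards [hf0] with y hy
            calc |x - y| * f x * f y ≤ ((x - y) ^ 2 + B) / (2 * √B) * f x * f y := by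
                  gcongr
                  exact abs_le_sq_add_div_two_sqrt hB _
              _ = _ := by ring
      _ = _ := by
          rw [integral_const_mul, integral_quadratic_mul hf hf1 hf2]
          ring
  calc ∫ x, ∫ y, |x - y| * f x * f y ∂μ ∂μ
      ≤ ∫ x, ((m₂ + B) + (-2 * m₁) * x + 1 * x ^ 2) * f x / (2 * √B) ∂μ := by
        refine integral_mono_of_nonneg ?_ ((hf.quadratic_mul hf2 _ _ _).div_const _) hinner
        filter_upwards [hf0] with x hx
        exact integral_nonneg_of_ae (by
          filter_upwards [hf0] with y hy
          exact mul_nonneg (mul_nonneg (abs_nonneg _) hx) hy)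
    _ = (2 * m₂ - 2 * m₁ ^ 2 + B) / (2 * √B) := by
        rw [integral_div, integral_quadratic_mul hf hf1 hf2]
        ring
    _ ≤ (2 * B) / (2 * √B) := by gcongr; nlinarith [sq_nonneg m₁]
    _ = √B := by
        rw [mul_div_mul_left _ _ two_ne_zero, Real.div_sqrt]

end Moments

lemma Real.rpow_le_rpow_mul_exp {q t : ℝ} (hq : 0 < q) (ht : 0 ≤ t) :
    t ^ q ≤ q ^ q * Real.exp t := by
  have h : t / q ≤ Real.exp (t / q) := by linarith [Real.add_one_le_exp (t / q)]
  calc t ^ q = q ^ q * (t / q) ^ q := by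
        rw [Real.div_rpow ht hq.le, mul_div_cancel₀ _ (Real.rpow_pos_of_pos hq q).ne']
    _ ≤ q ^ q * Real.exp (t / q) ^ q := by gcongr
    _ = q ^ q * Real.exp t := by
        rw [← Real.exp_mul, div_mul_cancel₀ _ hq.ne']

lemma Real.lintegral_rpow_mul_exp_neg_mul_Ioi {s t : ℝ} (hs : 0 < s) (ht : 0 < t) :
    ∫⁻ x in Ioi 0, ENNReal.ofReal (x ^ (s - 1) * Real.exp (-(t * x))) =
      ENNReal.ofReal ((1 / t) ^ s * Real.Gamma s) := by
  rw [← Real.integral_rpow_mul_exp_neg_mul_Ioi hs ht]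
  refine (ofReal_integral_eq_lintegral_ofReal ?_ ?_).symm
  · have h := integrableOn_rpow_mul_exp_neg_mul_rpow (s := s - 1) (by linarith) one_pos ht
    simp only [Real.rpow_one, neg_mul] at h
    exact h
  · filter_upwards [ae_restrict_mem measurableSet_Ioi] with x hx
    exact mul_nonneg (Real.rpow_nonneg (le_of_lt hx) _) (Real.exp_pos _).le

noncomputable def mixedGammaKernel (q : ℝ) (U : Measure ℝ) (x : ℝ) : ℝ :=
  ∫ t, t ^ q * Real.exp (-(t * x)) ∂U

def IsMixedGammaDensity (q : ℝ) (U : Measure ℝ) (c : ℝ) (π : ℝ → ℝ) : Prop :=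
  ∀ x ∈ Ioi (0 : ℝ), π x = c * x ^ (q - 1) * mixedGammaKernel q U x

section MixedGamma

variable {q : ℝ} {U : Measure ℝ}

lemma integrable_rpow_mul_exp_neg_mul [IsFiniteMeasure U] (hq : 0 < q) (hU : ∀ᵐ t ∂U, 0 ≤ t)
    {x : ℝ} (hx : 0 < x) : Integrable (fun t ↦ t ^ q * Real.exp (-(t * x))) U := by
  refine Integrable.of_bound (C := q ^ q / x ^ q) (by fun_prop) ?_
  filter_upwards [hU] with t ht
  have h := Real.rpow_le_rpow_mul_exp hq (mul_nonneg ht hx.le)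
  rw [Real.mul_rpow ht hx.le] at h
  rw [Real.norm_of_nonneg (by positivity), le_div_iff₀ (by positivity), Real.exp_neg]
  calc t ^ q * (Real.exp (t * x))⁻¹ * x ^ q = t ^ q * x ^ q / Real.exp (t * x) := by ring
    _ ≤ q ^ q := by rwa [div_le_iff₀ (Real.exp_pos _)]

lemma mixedGammaKernel_nonneg (hU : ∀ᵐ t ∂U, 0 ≤ t) (x : ℝ) : 0 ≤ mixedGammaKernel q U x :=
  integral_nonneg_of_ae <| hU.mono fun t ht ↦ by positivity

lemma lintegral_rpow_mul_mixedGammaKernel [IsFiniteMeasure U] (hq : 0 < q)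
    (hU : ∀ᵐ t ∂U, 0 < t) {s : ℝ} (hs : 0 < s) :
    ∫⁻ x in Ioi 0, ENNReal.ofReal (x ^ (s - 1) * mixedGammaKernel q U x) =
      ∫⁻ t, ENNReal.ofReal (Real.Gamma s * t ^ (q - s)) ∂U := by
  have hU₀ : ∀ᵐ t ∂U, 0 ≤ t := hU.mono fun t ht ↦ ht.le
  calc ∫⁻ x in Ioi 0, ENNReal.ofReal (x ^ (s - 1) * mixedGammaKernel q U x)
      = ∫⁻ x in Ioi 0, ∫⁻ t,
          ENNReal.ofReal (x ^ (s - 1) * (t ^ q * Real.exp (-(t * x)))) ∂U := by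
        refine setLIntegral_congr_fun measurableSet_Ioi fun x hx ↦ ?_
        rw [mixedGammaKernel, ← integral_const_mul]
        refine ofReal_integral_eq_lintegral_ofReal
          ((integrable_rpow_mul_exp_neg_mul hq hU₀ hx).const_mul _) ?_
        filter_upwards [hU₀] with t ht
        have : (0 : ℝ) ≤ x := le_of_lt hx
        positivity
    _ = ∫⁻ t, (∫⁻ x in Ioi 0,
          ENNReal.ofReal (x ^ (s - 1) * (t ^ q * Real.exp (-(t * x))))) ∂U :=
        lintegral_lintegral_swap (Measurable.aemeasurable (by fun_prop :
          Measurable fun p : ℝ × ℝ ↦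
            ENNReal.ofReal (p.1 ^ (s - 1) * (p.2 ^ q * Real.exp (-(p.2 * p.1))))))
    _ = ∫⁻ t, ENNReal.ofReal (Real.Gamma s * t ^ (q - s)) ∂U := by
        refine lintegral_congr_ae (hU.mono fun t ht ↦ ?_)
        simp_rw [mul_left_comm _ (t ^ q), ENNReal.ofReal_mul (Real.rpow_nonneg ht.le q)]
        rw [lintegral_const_mul' _ _ ENNReal.ofReal_ne_top,
          Real.lintegral_rpow_mul_exp_neg_mul_Ioi hs ht, ← ENNReal.ofReal_mul (by positivity),
          Real.rpow_sub ht, one_div, Real.inv_rpow ht.le]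
        ring_nf

variable {c : ℝ} {π : ℝ → ℝ}

namespace IsMixedGammaDensity

lemma ae_nonneg (hπ : IsMixedGammaDensity q U c π) (hc : 0 ≤ c) (hU : ∀ᵐ t ∂U, 0 ≤ t) :
    0 ≤ᵐ[volume.restrict (Ioi 0)] π := by
  filter_upwards [ae_restrict_mem measurableSet_Ioi] with x hx
  rw [hπ x hx]
  have : (0 : ℝ) ≤ x := le_of_lt hx
  exact mul_nonneg (by positivity) (mixedGammaKernel_nonneg hU x)

lemma lintegral_rpow_mul [IsFiniteMeasure U] (hπ : IsMixedGammaDensity q U c π) (hq : 0 < q)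
    (hU : ∀ᵐ t ∂U, 0 < t) (hc : 0 ≤ c) {p : ℝ} (hp : 0 < q + p) :
    ∫⁻ x in Ioi 0, ENNReal.ofReal (x ^ p * π x) =
      ENNReal.ofReal c * ∫⁻ t, ENNReal.ofReal (Real.Gamma (q + p) * t ^ (-p)) ∂U := by
  rw [show -p = q - (q + p) by ring, ← lintegral_rpow_mul_mixedGammaKernel hq hU hp,
    ← lintegral_const_mul' _ _ ENNReal.ofReal_ne_top]
  refine setLIntegral_congr_fun measurableSet_Ioi fun x hx ↦ ?_
  rw [hπ x hx, ← ENNReal.ofReal_mul hc, show q + p - 1 = p + (q - 1) by ring, Real.rpow_add hx]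
  ring_nf

lemma mul_Gamma_eq_one [IsProbabilityMeasure U] (hπ : IsMixedGammaDensity q U c π) (hq : 0 < q)
    (hU : ∀ᵐ t ∂U, 0 < t) (hc : 0 ≤ c) (hnorm : ∫ x in Ioi 0, π x = 1) :
    c * Real.Gamma q = 1 := by
  have h := hπ.lintegral_rpow_mul hq hU hc (p := 0) (by simpa using hq)
  simp only [Real.rpow_zero, one_mul, add_zero, neg_zero, mul_one, lintegral_const,
    measure_univ] at h
  rwa [integral_eq_lintegral_of_nonneg_ae (hπ.ae_nonneg hc (hU.mono fun t ht ↦ ht.le))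
    (Integrable.of_integral_ne_zero (by simp [hnorm])).1, h, ← ENNReal.ofReal_mul hc,
    ENNReal.toReal_ofReal (mul_nonneg hc (Real.Gamma_pos_of_pos hq).le)] at hnorm

lemma integral_sq_mul_le [IsProbabilityMeasure U] (hπ : IsMixedGammaDensity q U c π)
    (hq : 0 < q) {u : ℝ} (hu : 0 < u) (hU : ∀ᵐ t ∂U, u ≤ t) (hc : 0 ≤ c)
    (hnorm : ∫ x in Ioi 0, π x = 1) :
    Integrable (fun x ↦ x ^ 2 * π x) (volume.restrict (Ioi 0)) ∧
      ∫ x in Ioi 0, x ^ 2 * π x ≤ q * (q + 1) / u ^ 2 := by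
  have hU₀ : ∀ᵐ t ∂U, 0 < t := hU.mono fun t ht ↦ hu.trans_le ht
  have hπ₀ := hπ.ae_nonneg hc (hU₀.mono fun t ht ↦ ht.le)
  have hcΓ := hπ.mul_Gamma_eq_one hq hU₀ hc hnorm
  have hΓ : Real.Gamma (q + 2) = (q + 1) * q * Real.Gamma q := by
    rw [show q + 2 = q + 1 + 1 by ring, Real.Gamma_add_one (by positivity),
      Real.Gamma_add_one hq.ne', mul_assoc]
  have hle :
      ∫⁻ x in Ioi 0, ENNReal.ofReal (x ^ 2 * π x) ≤ ENNReal.ofReal (q * (q + 1) / u ^ 2) :=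
    calc ∫⁻ x in Ioi 0, ENNReal.ofReal (x ^ 2 * π x)
        = ENNReal.ofReal c * ∫⁻ t, ENNReal.ofReal (Real.Gamma (q + 2) * t ^ (-2 : ℝ)) ∂U := by
          simpa only [Real.rpow_two] using
            hπ.lintegral_rpow_mul hq hU₀ hc (p := 2) (by positivity)
      _ ≤ ENNReal.ofReal c * ∫⁻ _, ENNReal.ofReal (Real.Gamma (q + 2) * u ^ (-2 : ℝ)) ∂U := by
          refine mul_le_mul_right (lintegral_mono_ae (hU.mono fun t ht ↦ ?_)) _
          refine ENNReal.ofReal_le_ofReal (mul_le_mul_of_nonneg_left ?_ (by positivity))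
          exact Real.rpow_le_rpow_of_nonpos hu ht (by norm_num)
      _ = ENNReal.ofReal (q * (q + 1) / u ^ 2) := by
          rw [lintegral_const, measure_univ, mul_one, ← ENNReal.ofReal_mul hc, hΓ,
            Real.rpow_neg hu.le, Real.rpow_two]
          congr 1
          linear_combination (q + 1) * q / u ^ 2 * hcΓ
  have hm : AEStronglyMeasurable (fun x ↦ x ^ 2 * π x) (volume.restrict (Ioi 0)) :=
    (continuous_pow 2).aestronglyMeasurable.mul
      (Integrable.of_integral_ne_zero (by simp [hnorm])).1
  have h₀ : 0 ≤ᵐ[volume.restrict (Ioi 0)] fun x ↦ x ^ 2 * π x := by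
    filter_upwards [hπ₀] with x hx
    exact mul_nonneg (sq_nonneg x) hx
  refine ⟨(lintegral_ofReal_ne_top_iff_integrable hm h₀).1 (ne_top_of_le_ne_top
    ENNReal.ofReal_ne_top hle), ?_⟩
  rw [integral_eq_lintegral_of_nonneg_ae h₀ hm]
  exact ENNReal.toReal_le_of_le_ofReal (by positivity) hle

end IsMixedGammaDensity

end MixedGamma

/-- For a mixed Gamma probability density `π(x) = c x^{q-1} ∫ λ^q e^{-λx} dU(λ)`
with mixing measure `U` supported in `[u, ∞)`, `u > 0`, one has
`∫∫ |x₁ - x₂| π(x₁) π(x₂) dx₁ dx₂ ≤ √(2q(q+1)) / u`. -/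
theorem mixed_gamma_mean_abs_diff_bound
    (q u : ℝ) (hq : 0 < q) (hu : 0 < u)
    (U : Measure ℝ) [IsProbabilityMeasure U] (hUsupp : U (Set.Iio u) = 0)
    (c : ℝ) (hc : 0 < c) (π : ℝ → ℝ)
    (hπ : ∀ x ∈ Set.Ioi (0 : ℝ),
      π x = c * x ^ (q - 1) * ∫ t, t ^ q * Real.exp (-(t * x)) ∂U)
    (hnorm : (∫ x in Set.Ioi (0 : ℝ), π x) = 1) :
    (∫ x1 in Set.Ioi (0 : ℝ), ∫ x2 in Set.Ioi (0 : ℝ), |x1 - x2| * π x1 * π x2) ≤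
      Real.sqrt (2 * q * (q + 1)) / u := by
  have hπ' : IsMixedGammaDensity q U c π := hπ
  have hU : ∀ᵐ t ∂U, u ≤ t := ae_iff.2 (by simp only [not_le]; exact hUsupp)
  obtain ⟨hint₂, hle₂⟩ := hπ'.integral_sq_mul_le hq hu hU hc.le hnorm
  have hsqrt : √(2 * q * (q + 1)) / u = √(2 * (q * (q + 1) / u ^ 2)) := by
    rw [mul_div_assoc', Real.sqrt_div' _ (sq_nonneg u), Real.sqrt_sq hu.le, mul_assoc]
  rw [hsqrt]
  exact integral_integral_abs_sub_mul_le
    (hπ'.ae_nonneg hc.le (hU.mono fun t ht ↦ hu.le.trans ht))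
    (Integrable.of_integral_ne_zero (by simp [hnorm])) hnorm hint₂ hle₂ (by positivity)
end

section
/- Let u_0 > 0, B̄ > 0, b > 0, δ > 1, J ∈ ℕ, and let (y_j)_{j≥1} be positive reals with b^j y_j ≥ δ^j for all j ≥ J. Set S_k = u_0 + Σ_{j=1}^k b^j y_j for k ≥ 0. Then for all n ≥ J, (Π_{k=0}^{n−1} (1 + B̄/S_k)) / S_n ≤ exp(B̄ J / u_0) · exp(B̄ δ/(δ − 1)) · δ^{−n}. -/
open Finset

/-! By `1 + x ≤ exp x`, the product is at most `exp (B̄ ∑_{k<n} 1/S_k)`. Each `S_k` is at least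
`u₀`, which bounds the first `J` terms of the sum by `J/u₀`, and for `k ≥ J` it is at least
`δ^k`, which bounds the remaining terms by the geometric series `∑ δ^{-k} ≤ δ/(δ-1)`.
Dividing by `S_n ≥ δ^n` gives the factor `δ^{-n}`. -/

section LowerBounds

variable {f : ℕ → ℝ}

lemma sum_Icc_one_nonneg (hf : ∀ j, 1 ≤ j → 0 ≤ f j) (k : ℕ) : 0 ≤ ∑ j ∈ Icc 1 k, f j :=
  sum_nonneg fun j hj => hf j (mem_Icc.mp hj).1

lemma le_sum_Icc_one_self (hf : ∀ j, 1 ≤ j → 0 ≤ f j) {k : ℕ} (hk : 1 ≤ k) : f k ≤ ∑ j ∈ Icc 1 k, f j :=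
  single_le_sum (fun j hj => hf j (mem_Icc.mp hj).1) (mem_Icc.mpr ⟨hk, le_rfl⟩)

end LowerBounds

section Reciprocals

variable {S : ℕ → ℝ} {B u₀ δ : ℝ} {J : ℕ}

lemma sum_Ico_div_le_of_pow_le (hB : 0 ≤ B) (hδ : 1 < δ)
    (hSδ : ∀ k, J ≤ k → δ ^ k ≤ S k) (n : ℕ) : ∑ k ∈ Ico J n, B / S k ≤ B * δ / (δ - 1) := by
  have hδ₀ : 0 < δ := zero_lt_one.trans hδ
  have hr₀ : 0 ≤ δ⁻¹ := inv_nonneg.mpr hδ₀.le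
  have hr₁ : δ⁻¹ < 1 := inv_lt_one_of_one_lt₀ hδ
  calc ∑ k ∈ Ico J n, B / S k
      ≤ ∑ k ∈ Ico J n, B * δ⁻¹ ^ k := sum_le_sum fun k hk => by
        rw [inv_pow, ← div_eq_mul_inv]
        exact div_le_div_of_nonneg_left hB (pow_pos hδ₀ k) (hSδ k (mem_Ico.mp hk).1)
    _ = B * ∑ k ∈ Ico J n, δ⁻¹ ^ k := (mul_sum _ _ _).symm
    _ ≤ B * (δ⁻¹ ^ J / (1 - δ⁻¹)) :=
        mul_le_mul_of_nonneg_left (geom_sum_Ico_le_of_lt_one hr₀ hr₁) hB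
    _ ≤ B * (1 / (1 - δ⁻¹)) := by
        gcongr
        exact pow_le_one₀ hr₀ hr₁.le
    _ = B * δ / (δ - 1) := by field_simp

lemma sum_range_div_le (hB : 0 ≤ B) (hu₀ : 0 < u₀) (hδ : 1 < δ) (hSu : ∀ k, u₀ ≤ S k)
    (hSδ : ∀ k, J ≤ k → δ ^ k ≤ S k) {n : ℕ} (hn : J ≤ n) :
    ∑ k ∈ range n, B / S k ≤ B * J / u₀ + B * δ / (δ - 1) := by
  have hhead : ∑ k ∈ range J, B / S k ≤ B * J / u₀ :=
    calc ∑ k ∈ range J, B / S k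
        ≤ ∑ _k ∈ range J, B / u₀ :=
          sum_le_sum fun k _ => div_le_div_of_nonneg_left hB hu₀ (hSu k)
      _ = B * J / u₀ := by rw [sum_const, card_range, nsmul_eq_mul]; ring
  rw [← sum_range_add_sum_Ico _ hn]
  exact add_le_add hhead (sum_Ico_div_le_of_pow_le hB hδ hSδ n)

lemma prod_one_add_div_le (hB : 0 ≤ B) (hu₀ : 0 < u₀) (hδ : 1 < δ)
    (hSu : ∀ k, u₀ ≤ S k) (hSδ : ∀ k, J ≤ k → δ ^ k ≤ S k) {n : ℕ} (hn : J ≤ n) :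
    ∏ k ∈ range n, (1 + B / S k) ≤
      Real.exp (B * J / u₀) * Real.exp (B * δ / (δ - 1)) := by
  rw [← Real.exp_add]
  exact (Real.prod_one_add_le_exp_sum _ fun k => div_nonneg hB (hu₀.trans_le (hSu k)).le).trans
    (Real.exp_le_exp.mpr (sum_range_div_le hB hu₀ hδ hSu hSδ hn))

end Reciprocals

/-- Deterministic estimate: if `b^j y_j ≥ δ^j` for all `j ≥ J` and
`S_k = u₀ + ∑_{j=1}^k b^j y_j`, then for `n ≥ J`,
`(∏_{k=0}^{n-1} (1 + B̄/S_k)) / S_n ≤ exp(B̄ J/u₀) exp(B̄ δ/(δ-1)) δ^{-n}`. -/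
theorem deterministic_product_bound
    (u0 Bbar b δ : ℝ) (hu0 : 0 < u0) (hB : 0 < Bbar) (hb : 0 < b) (hδ : 1 < δ)
    (J : ℕ) (hJ : 1 ≤ J) (y : ℕ → ℝ) (hy : ∀ j, 1 ≤ j → 0 < y j)
    (hge : ∀ j, J ≤ j → δ ^ j ≤ b ^ j * y j)
    (S : ℕ → ℝ) (hS : ∀ k, S k = u0 + ∑ j ∈ Finset.Icc 1 k, b ^ j * y j)
    (n : ℕ) (hn : J ≤ n) :
    (∏ k ∈ Finset.range n, (1 + Bbar / S k)) / S n ≤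
      Real.exp (Bbar * J / u0) * Real.exp (Bbar * δ / (δ - 1)) / δ ^ n := by
  have hterm : ∀ j, 1 ≤ j → 0 ≤ b ^ j * y j := fun j hj =>
    (mul_pos (pow_pos hb j) (hy j hj)).le
  have hSu : ∀ k, u0 ≤ S k := fun k => by
    rw [hS k]
    linarith [sum_Icc_one_nonneg hterm k]
  have hSδ : ∀ k, J ≤ k → δ ^ k ≤ S k := fun k hk => by
    rw [hS k]
    linarith [hge k hk, le_sum_Icc_one_self hterm (hJ.trans hk)]
  exact div_le_div₀ (by positivity) (prod_one_add_div_le hB.le hu0 hδ hSu hSδ hn)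
    (pow_pos (zero_lt_one.trans hδ) n) (hSδ n hn)
end
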